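/- arXiv:2207.05587 — 5 statements merged into one kernel-verified Lean document; each statement's English description precedes it below -/
import Mathlib

section
/- For every t ≥ 0, the function u(x,y) = ln( 2e^x / (1 + t² + 2 t e^x cos y + e^{2x}) ) satisfies the Liouville equation -Δu = e^{2u} on ℝ². -/
/-! In each variable `u` is an affine function minus `log D`, where `D` is the denominator, so
`-Δu = Δ(log D) = ((D_xx + D_yy) D - D_x² - D_y²) / D²`. Since `D_xx + D_yy = 4e^{2x}` and, by
`sin² + cos² = 1`, `D_x² + D_y² = 4e^{2x} (D - 1)`, this equals `(2eˣ / D)² = e^{2u}`. -/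

open Real

theorem exp_two_mul_eq_sq (x : ℝ) : exp (2 * x) = exp x ^ 2 := by
  rw [← exp_nat_mul]; norm_num

theorem exp_two_mul_log {q : ℝ} (hq : 0 < q) : exp (2 * log q) = q ^ 2 := by
  rw [← exp_log (pow_pos hq 2), log_pow]
  norm_num

theorem hasDerivAt_exp_const_mul (c s : ℝ) :
    HasDerivAt (fun s => exp (c * s)) (c * exp (c * s)) s := by
  simpa [mul_comm] using ((hasDerivAt_id s).const_mul c).exp

theorem deriv_deriv_sub_log {ℓ g g' : ℝ → ℝ} {b g'' x : ℝ} (hℓ : ∀ s, HasDerivAt ℓ b s)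
    (hg : ∀ s, HasDerivAt g (g' s) s) (hg' : HasDerivAt g' g'' x) (hg0 : ∀ s, g s ≠ 0) :
    deriv (deriv fun s => ℓ s - log (g s)) x = -((g'' * g x - g' x ^ 2) / g x ^ 2) := by
  have hderiv : deriv (fun s => ℓ s - log (g s)) = fun s => b - g' s / g s :=
    funext fun s => ((hℓ s).sub ((hg s).log (hg0 s))).deriv
  rw [hderiv]
  exact ((hasDerivAt_const x b).sub (hg'.div (hg x) (hg0 x))).deriv.trans (by ring)

/-- `1 + |t + e^(x + iy)|²`: the solution is `log (2|f'| / (1 + |f|²))` for `f z = t + e^z`.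
Reducible, so that rewriting with it matches the unfolded denominator of the statement. -/
noncomputable abbrev liouvilleDenom (t x y : ℝ) : ℝ :=
  1 + t ^ 2 + 2 * t * exp x * cos y + exp (2 * x)

theorem liouvilleDenom_pos (t x y : ℝ) : 0 < liouvilleDenom t x y := by
  rw [liouvilleDenom, exp_two_mul_eq_sq]
  nlinarith [sq_nonneg (t + exp x * cos y), sq_nonneg (exp x * sin y), sin_sq_add_cos_sq y]

theorem hasDerivAt_liouvilleDenom_fst (t y s : ℝ) :
    HasDerivAt (fun s => liouvilleDenom t s y) (2 * t * exp s * cos y + 2 * exp (2 * s)) s :=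
  ((((hasDerivAt_exp s).const_mul (2 * t)).mul_const (cos y)).const_add (1 + t ^ 2)).add
    (hasDerivAt_exp_const_mul 2 s)

theorem hasDerivAt_liouvilleDenom_fst_fst (t y s : ℝ) :
    HasDerivAt (fun s => 2 * t * exp s * cos y + 2 * exp (2 * s))
      (2 * t * exp s * cos y + 4 * exp (2 * s)) s :=
  ((((hasDerivAt_exp s).const_mul (2 * t)).mul_const (cos y)).add
    ((hasDerivAt_exp_const_mul 2 s).const_mul 2)).congr_deriv (by ring)

theorem hasDerivAt_liouvilleDenom_snd (t x s : ℝ) :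
    HasDerivAt (fun s => liouvilleDenom t x s) (-(2 * t * exp x * sin s)) s :=
  ((((hasDerivAt_cos s).const_mul (2 * t * exp x)).const_add (1 + t ^ 2)).add_const
    (exp (2 * x))).congr_deriv (by ring)

theorem hasDerivAt_liouvilleDenom_snd_snd (t x s : ℝ) :
    HasDerivAt (fun s => -(2 * t * exp x * sin s)) (-(2 * t * exp x * cos s)) s :=
  ((hasDerivAt_sin s).const_mul (2 * t * exp x)).neg

theorem family_solves_liouville_general (t : ℝ) :
    ∀ x y : ℝ,
      -(deriv (deriv (fun s : ℝ => Real.log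
            (2 * Real.exp s / (1 + t ^ 2 + 2 * t * Real.exp s * Real.cos y + Real.exp (2 * s))))) x
          + deriv (deriv (fun s : ℝ => Real.log
            (2 * Real.exp x / (1 + t ^ 2 + 2 * t * Real.exp x * Real.cos s + Real.exp (2 * x))))) y)
        = Real.exp (2 * Real.log
            (2 * Real.exp x / (1 + t ^ 2 + 2 * t * Real.exp x * Real.cos y + Real.exp (2 * x)))) := by
  intro x y
  have hD := liouvilleDenom_pos t
  have hslice_x : (fun s => log (2 * exp s / liouvilleDenom t s y))
      = fun s => (log 2 + s) - log (liouvilleDenom t s y) := by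
    funext s
    rw [log_div (by positivity) (hD s y).ne', log_mul two_ne_zero (exp_pos s).ne', log_exp]
  have hslice_y : (fun s => log (2 * exp x / liouvilleDenom t x s))
      = fun s => log (2 * exp x) - log (liouvilleDenom t x s) :=
    funext fun s => log_div (by positivity) (hD x s).ne'
  rw [hslice_x, hslice_y,
    deriv_deriv_sub_log (fun s => (hasDerivAt_id' s).const_add _)
      (hasDerivAt_liouvilleDenom_fst t y) (hasDerivAt_liouvilleDenom_fst_fst t y x)
      (fun s => (hD s y).ne'),
    deriv_deriv_sub_log (fun s => hasDerivAt_const s _) (hasDerivAt_liouvilleDenom_snd t x)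
      (hasDerivAt_liouvilleDenom_snd_snd t x y) (fun s => (hD x s).ne'),
    exp_two_mul_log (div_pos (by positivity) (hD x y))]
  have hDxy := (hD x y).ne'
  rw [liouvilleDenom, exp_two_mul_eq_sq] at hDxy ⊢
  field_simp
  linear_combination (-4 * t ^ 2 * exp x) * sin_sq_add_cos_sq y

/-- For every `t ≥ 0`, `u(x,y) = log (2eˣ/(1+t²+2teˣ cos y+e^{2x}))`
satisfies the Liouville equation `-Δu = e^{2u}` on `ℝ²`. -/
theorem family_solves_liouville (t : ℝ) (ht : 0 ≤ t) :
    ∀ x y : ℝ,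
      -(deriv (deriv (fun s : ℝ => Real.log
            (2 * Real.exp s / (1 + t ^ 2 + 2 * t * Real.exp s * Real.cos y + Real.exp (2 * s))))) x
          + deriv (deriv (fun s : ℝ => Real.log
            (2 * Real.exp x / (1 + t ^ 2 + 2 * t * Real.exp x * Real.cos s + Real.exp (2 * x))))) y)
        = Real.exp (2 * Real.log
            (2 * Real.exp x / (1 + t ^ 2 + 2 * t * Real.exp x * Real.cos y + Real.exp (2 * x)))) :=
  family_solves_liouville_general t
end

section
/- Every solution u: ℝ → ℝ of -u'' = e^{2u} on ℝ has the form u(x) = ln λ + ln(sech(λ(± x + C))) for some λ > 0 and C ∈ ℝ; equivalently, u(x) = ln λ + ln sech(λ x + b) for some λ > 0, b ∈ ℝ. -/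
/-!
Multiplying the equation by `u'` shows that the energy `u'² + e^{2u}` is a constant `λ²`,
`λ > 0`. Hence `w = e^{-u}` solves the linear equation `w'' = (u'² - u'') w = λ² w`, so
`2λw(x) = a e^{λx} + b e^{-λx}` with `a = w'(0) + λw(0)`, `b = λw(0) - w'(0)`.
The energy at `0` gives `ab = λ²w(0)² - w'(0)² = 1` with `a > 0`, so
`λ e^{-u(x)} = cosh (λx + log a)`.
-/

open Real

theorem deriv_sq_div_two_add_comp_eq {u g G : ℝ → ℝ} (hu : Differentiable ℝ u)
    (hG : ∀ y, HasDerivAt G (g y) y) (hu' : ∀ x, HasDerivAt (deriv u) (-g (u x)) x)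
    (x y : ℝ) : deriv u x ^ 2 / 2 + G (u x) = deriv u y ^ 2 / 2 + G (u y) := by
  have hE : ∀ x, HasDerivAt (fun x => deriv u x ^ 2 / 2 + G (u x)) 0 x := fun x => by
    refine ((((hu' x).fun_pow 2).div_const 2).fun_add
      ((hG (u x)).comp x (hu x).hasDerivAt)).congr_deriv ?_
    push_cast
    ring
  exact is_const_of_deriv_eq_zero (fun x => (hE x).differentiableAt) (fun x => (hE x).deriv) x y

theorem exp_neg_mul_mul_add_mul_eq {w w' : ℝ → ℝ} {k : ℝ}
    (hw : ∀ x, HasDerivAt w (w' x) x) (hw' : ∀ x, HasDerivAt w' (k ^ 2 * w x) x) (x : ℝ) :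
    exp (-(k * x)) * (w' x + k * w x) = w' 0 + k * w 0 := by
  have h : ∀ x, HasDerivAt (fun x => exp (-(k * x)) * (w' x + k * w x)) 0 x := fun x => by
    refine (((hasDerivAt_id' x).const_mul k).fun_neg.exp.fun_mul
      ((hw' x).fun_add ((hw x).const_mul k))).congr_deriv ?_
    ring
  simpa using is_const_of_deriv_eq_zero (fun x => (h x).differentiableAt) (fun x => (h x).deriv) x 0

theorem two_mul_mul_eq_mul_exp_add_mul_exp_neg {w w' : ℝ → ℝ} {k : ℝ}
    (hw : ∀ x, HasDerivAt w (w' x) x) (hw' : ∀ x, HasDerivAt w' (k ^ 2 * w x) x) (x : ℝ) :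
    2 * k * w x = (w' 0 + k * w 0) * exp (k * x) + (k * w 0 - w' 0) * exp (-(k * x)) := by
  have hplus := exp_neg_mul_mul_add_mul_eq hw hw' x
  have hminus := exp_neg_mul_mul_add_mul_eq (k := -k) hw (by simpa using hw') x
  have hinv : exp (k * x) * exp (-(k * x)) = 1 := by rw [← exp_add, add_neg_cancel, exp_zero]
  simp only [neg_mul, neg_neg] at hminus
  linear_combination exp (k * x) * hplus - exp (-(k * x)) * hminus - 2 * k * w x * hinv

theorem mul_exp_add_inv_mul_exp_neg {a : ℝ} (ha : 0 < a) (s : ℝ) :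
    a * exp s + a⁻¹ * exp (-s) = 2 * cosh (s + log a) := by
  rw [cosh_eq, neg_add, exp_add, exp_add, exp_neg (log a), exp_log ha]
  ring

theorem deriv_sq_add_exp_two_mul_eq {u : ℝ → ℝ} (hu : Differentiable ℝ u)
    (hu' : ∀ x, HasDerivAt (deriv u) (-exp (2 * u x)) x) (x : ℝ) :
    deriv u x ^ 2 + exp (2 * u x) = deriv u 0 ^ 2 + exp (2 * u 0) := by
  have hG (y : ℝ) : HasDerivAt (fun y => exp (2 * y) / 2) (exp (2 * y)) y := by
    simpa using (((hasDerivAt_id' y).const_mul 2).exp.div_const 2)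
  have := deriv_sq_div_two_add_comp_eq hu hG hu' x 0
  linarith

theorem hasDerivAt_neg_deriv_mul_exp_neg {u : ℝ → ℝ} (hu : Differentiable ℝ u)
    (hu' : ∀ x, HasDerivAt (deriv u) (-exp (2 * u x)) x) (x : ℝ) :
    HasDerivAt (fun x => -deriv u x * exp (-u x))
      ((deriv u 0 ^ 2 + exp (2 * u 0)) * exp (-u x)) x := by
  refine ((hu' x).fun_neg.fun_mul (hu x).hasDerivAt.fun_neg.exp).congr_deriv ?_
  rw [← deriv_sq_add_exp_two_mul_eq hu hu' x]
  ring

theorem exists_mul_exp_neg_eq_cosh {u : ℝ → ℝ} (hu : Differentiable ℝ u)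
    (hu' : ∀ x, HasDerivAt (deriv u) (-exp (2 * u x)) x) :
    ∃ lam b : ℝ, 0 < lam ∧ ∀ x, lam * exp (-u x) = cosh (lam * x + b) := by
  set lam := √(deriv u 0 ^ 2 + exp (2 * u 0))
  have hlam : 0 < lam := by positivity
  have hlam_sq : lam ^ 2 = deriv u 0 ^ 2 + exp (2 * u 0) := sq_sqrt (by positivity)
  set w := fun x => exp (-u x)
  have hw (x : ℝ) : HasDerivAt w (-deriv u x * w x) x := by
    simpa [mul_comm] using (hu x).hasDerivAt.neg.exp
  have hw' (x : ℝ) : HasDerivAt (fun x => -deriv u x * w x) (lam ^ 2 * w x) x := by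
    rw [hlam_sq]; exact hasDerivAt_neg_deriv_mul_exp_neg hu hu' x
  set a := -deriv u 0 * w 0 + lam * w 0
  have hw0 : exp (2 * u 0) * w 0 ^ 2 = 1 := by
    rw [← exp_nat_mul, ← exp_add]; push_cast; ring_nf; exact exp_zero
  have ha_mul : a * (lam * w 0 - -deriv u 0 * w 0) = 1 := by
    linear_combination w 0 ^ 2 * hlam_sq + hw0
  have ha : 0 < a := by
    have : 0 < a + (lam * w 0 - -deriv u 0 * w 0) := by linarith [mul_pos hlam (exp_pos (-u 0))]
    nlinarith
  refine ⟨lam, log a, hlam, fun x => ?_⟩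
  have hsol : 2 * lam * w x = a * exp (lam * x) + a⁻¹ * exp (-(lam * x)) := by
    rw [← eq_inv_of_mul_eq_one_right ha_mul]
    exact two_mul_mul_eq_mul_exp_add_mul_exp_neg hw hw' x
  rw [mul_exp_add_inv_mul_exp_neg ha] at hsol
  change lam * w x = _
  linarith

/-- Every C² solution of `-u'' = e^{2u}` on `ℝ` has the form
`u(x) = log λ + log (sech (λ x + b))` for some `λ > 0`, `b ∈ ℝ`. -/
theorem one_dim_classification (u : ℝ → ℝ) (hu : ContDiff ℝ 2 u)
    (heq : ∀ x : ℝ, -(deriv (deriv u) x) = Real.exp (2 * u x)) :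
    ∃ lam b : ℝ, 0 < lam ∧
      ∀ x : ℝ, u x = Real.log lam + Real.log (1 / Real.cosh (lam * x + b)) := by
  have hu' : ContDiff ℝ 1 (deriv u) := (contDiff_succ_iff_deriv.mp hu).2.2
  have hu'' (x : ℝ) : HasDerivAt (deriv u) (-exp (2 * u x)) x := by
    rw [← heq x, neg_neg]
    exact (hu'.differentiable one_ne_zero x).hasDerivAt
  obtain ⟨lam, b, hlam, hcosh⟩ :=
    exists_mul_exp_neg_eq_cosh (hu.differentiable two_ne_zero) hu''
  refine ⟨lam, b, hlam, fun x => ?_⟩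
  rw [← hcosh x, one_div, log_inv, log_mul hlam.ne' (exp_pos _).ne', log_exp]
  ring
end

section
/- If f: ℂ → ℂ is holomorphic with f' nowhere vanishing, then u(z) = log( 2|f'(z)| / (1 + |f(z)|²) ) satisfies -Δu = e^{2u} on ℂ ≅ ℝ². -/
/-!
Since `f' ≠ 0`, `log f^# = log ‖2 f'‖ - log (1 + ‖f‖²)`, and the first term is harmonic. The
Laplacian of `log (1 + ‖f‖²)` is the sum of its second derivatives along the directions `1` and
`I`. Along direction `v` these involve `⟪f, f'' v²⟫`, which cancels between `v = 1` and `v = I`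
(`I² = -1`), and `⟪f, f' v⟫²`, whose two values add up to `‖f‖² ‖f'‖²`; what remains is
`Δ log (1 + ‖f‖²) = 4 ‖f'‖² / (1 + ‖f‖²)² = (f^#)²`.
-/

open Complex InnerProductSpace Laplacian

theorem ContDiff.deriv_deriv_comp_of_hasDerivAt {E F : Type*} [NormedAddCommGroup E]
    [NormedSpace ℝ E] [NormedAddCommGroup F] [NormedSpace ℝ F] {g : E → F}
    (hg : ContDiff ℝ 2 g) {γ : ℝ → E} {v : E} (hγ : ∀ t, HasDerivAt γ v t) (t : ℝ) :
    deriv (deriv (g ∘ γ)) t = fderiv ℝ (fderiv ℝ g) (γ t) v v := by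
  have hg₁ : Differentiable ℝ g := hg.differentiable (by norm_num)
  have hg₂ : Differentiable ℝ (fderiv ℝ g) :=
    (hg.fderiv_right (m := 1) (by norm_num)).differentiable (by norm_num)
  have hfirst : deriv (g ∘ γ) = fun t => fderiv ℝ g (γ t) v := by
    funext t
    exact ((hg₁ (γ t)).hasFDerivAt.comp_hasDerivAt t (hγ t)).deriv
  rw [hfirst]
  exact (((hg₂ (γ t)).hasFDerivAt.comp_hasDerivAt t (hγ t)).clm_apply
    (hasDerivAt_const t v)).deriv.trans (by simp)

theorem hasDerivAt_ofReal_add_mul_I (y t : ℝ) :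
    HasDerivAt (fun s : ℝ => (s : ℂ) + y * I) 1 t :=
  ((hasDerivAt_id t).ofReal_comp).add_const _

theorem hasDerivAt_add_ofReal_mul_I (x t : ℝ) :
    HasDerivAt (fun s : ℝ => (x : ℂ) + s * I) I t := by
  simpa using (((hasDerivAt_id t).ofReal_comp).mul_const I).const_add (x : ℂ)

theorem laplacian_eq_deriv_deriv_add_deriv_deriv {F : Type*} [NormedAddCommGroup F]
    [NormedSpace ℝ F] {g : ℂ → F} (hg : ContDiff ℝ 2 g) (x y : ℝ) :
    Δ g (x + y * I) = deriv (deriv fun s : ℝ => g (s + y * I)) x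
      + deriv (deriv fun s : ℝ => g (x + s * I)) y := by
  rw [laplacian_eq_iteratedFDeriv_complexPlane]
  simp only [iteratedFDeriv_two_apply]
  rw [← Function.comp_def g, hg.deriv_deriv_comp_of_hasDerivAt (hasDerivAt_ofReal_add_mul_I y) x,
    ← Function.comp_def g, hg.deriv_deriv_comp_of_hasDerivAt (hasDerivAt_add_ofReal_mul_I x) y]
  simp

section LogOneAddNormSq

variable {E : Type*} [NormedAddCommGroup E] [InnerProductSpace ℝ E]

theorem ContDiff.log_one_add_norm_sq {G : Type*} [NormedAddCommGroup G] [NormedSpace ℝ G]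
    {n : WithTop ℕ∞} {φ : G → E} (hφ : ContDiff ℝ n φ) :
    ContDiff ℝ n fun z => Real.log (1 + ‖φ z‖ ^ 2) :=
  (contDiff_const.add (hφ.norm_sq ℝ)).log fun _ => by positivity

theorem HasDerivAt.log_one_add_norm_sq {φ : ℝ → E} {φ' : E} {t : ℝ} (hφ : HasDerivAt φ φ' t) :
    HasDerivAt (fun s => Real.log (1 + ‖φ s‖ ^ 2)) (2 * ⟪φ t, φ'⟫_ℝ / (1 + ‖φ t‖ ^ 2)) t :=
  (hφ.norm_sq.const_add 1).log (by positivity)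

theorem hasDerivAt_deriv_log_one_add_norm_sq {φ φ' : ℝ → E} {φ'' : E} {t : ℝ}
    (hφ : ∀ s, HasDerivAt φ (φ' s) s) (hφ' : HasDerivAt φ' φ'' t) :
    HasDerivAt (deriv fun s => Real.log (1 + ‖φ s‖ ^ 2))
      ((2 * (‖φ' t‖ ^ 2 + ⟪φ t, φ''⟫_ℝ) * (1 + ‖φ t‖ ^ 2) - (2 * ⟪φ t, φ' t⟫_ℝ) ^ 2)
        / (1 + ‖φ t‖ ^ 2) ^ 2) t := by
  have hfirst : deriv (fun s => Real.log (1 + ‖φ s‖ ^ 2))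
      = fun s => 2 * ⟪φ s, φ' s⟫_ℝ / (1 + ‖φ s‖ ^ 2) :=
    funext fun s => (hφ s).log_one_add_norm_sq.deriv
  rw [hfirst]
  refine ((((hφ t).inner ℝ hφ').const_mul 2).div ((hφ t).norm_sq.const_add 1)
    (by positivity)).congr_deriv ?_
  rw [real_inner_self_eq_norm_sq]
  ring

end LogOneAddNormSq

theorem inner_sq_add_inner_mul_I_sq (a b : ℂ) :
    ⟪a, b⟫_ℝ ^ 2 + ⟪a, b * I⟫_ℝ ^ 2 = ‖a‖ ^ 2 * ‖b‖ ^ 2 := by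
  simp only [Complex.inner, Complex.sq_norm, normSq_apply, mul_re, mul_im, conj_re, conj_im,
    I_re, I_im]
  ring

theorem deriv_deriv_log_one_add_norm_sq_comp {F : ℂ → ℂ} (hF : Differentiable ℂ F)
    {ℓ : ℝ → ℂ} {v : ℂ} (hℓ : ∀ s, HasDerivAt ℓ v s) (t : ℝ) :
    deriv (deriv fun s => Real.log (1 + ‖F (ℓ s)‖ ^ 2)) t
      = (2 * (‖deriv F (ℓ t) * v‖ ^ 2 + ⟪F (ℓ t), deriv (deriv F) (ℓ t) * v * v⟫_ℝ)
          * (1 + ‖F (ℓ t)‖ ^ 2) - (2 * ⟪F (ℓ t), deriv F (ℓ t) * v⟫_ℝ) ^ 2)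
        / (1 + ‖F (ℓ t)‖ ^ 2) ^ 2 :=
  (hasDerivAt_deriv_log_one_add_norm_sq (φ := F ∘ ℓ)
    (fun s => (hF (ℓ s)).hasDerivAt.comp s (hℓ s))
    ((hF.deriv (ℓ t)).hasDerivAt.comp t (hℓ t) |>.mul_const v)).deriv

theorem laplacian_log_one_add_norm_sq {F : ℂ → ℂ} (hF : Differentiable ℂ F) (z : ℂ) :
    Δ (fun z => Real.log (1 + ‖F z‖ ^ 2)) z = 4 * ‖deriv F z‖ ^ 2 / (1 + ‖F z‖ ^ 2) ^ 2 := by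
  rw [← re_add_im z, laplacian_eq_deriv_deriv_add_deriv_deriv
      (hF.contDiff.restrict_scalars ℝ).log_one_add_norm_sq,
    deriv_deriv_log_one_add_norm_sq_comp hF (hasDerivAt_ofReal_add_mul_I z.im),
    deriv_deriv_log_one_add_norm_sq_comp hF (hasDerivAt_add_ofReal_mul_I z.re)]
  set w : ℂ := z.re + z.im * I
  have hsq := inner_sq_add_inner_mul_I_sq (F w) (deriv F w)
  have hI : ⟪F w, deriv (deriv F) w * I * I⟫_ℝ = -⟪F w, deriv (deriv F) w⟫_ℝ := by
    rw [mul_assoc, I_mul_I, mul_neg_one, inner_neg_right]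
  simp only [mul_one, norm_mul, norm_I, hI]
  field_simp
  linear_combination (-4 : ℝ) * hsq

noncomputable def sphericalDerivative (f : ℂ → ℂ) (z : ℂ) : ℝ :=
  2 * ‖deriv f z‖ / (1 + ‖f z‖ ^ 2)

section SphericalDerivative

variable {f : ℂ → ℂ}

theorem sphericalDerivative_pos {z : ℂ} (hz : deriv f z ≠ 0) : 0 < sphericalDerivative f z := by
  unfold sphericalDerivative
  positivity

theorem log_sphericalDerivative_eq (hf' : ∀ z, deriv f z ≠ 0) :
    (fun z => Real.log (sphericalDerivative f z))
      = (fun z => Real.log ‖2 * deriv f z‖) - fun z => Real.log (1 + ‖f z‖ ^ 2) := by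
  funext z
  have hz := hf' z
  rw [Pi.sub_apply, norm_mul, Complex.norm_two, sphericalDerivative,
    Real.log_div (by positivity) (by positivity)]

theorem harmonicAt_log_norm_two_mul_deriv (hf : Differentiable ℂ f) {z : ℂ}
    (hz : deriv f z ≠ 0) : HarmonicAt (fun z => Real.log ‖2 * deriv f z‖) z :=
  ((hf.deriv.const_mul 2).analyticAt z).harmonicAt_log_norm (mul_ne_zero two_ne_zero hz)

theorem contDiff_log_sphericalDerivative (hf : Differentiable ℂ f) (hf' : ∀ z, deriv f z ≠ 0) :
    ContDiff ℝ 2 fun z => Real.log (sphericalDerivative f z) := by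
  rw [log_sphericalDerivative_eq hf']
  exact (contDiff_iff_contDiffAt.2 fun z =>
    (harmonicAt_log_norm_two_mul_deriv hf (hf' z)).1).sub
      (hf.contDiff.restrict_scalars ℝ).log_one_add_norm_sq

theorem laplacian_log_sphericalDerivative (hf : Differentiable ℂ f)
    (hf' : ∀ z, deriv f z ≠ 0) (z : ℂ) :
    Δ (fun z => Real.log (sphericalDerivative f z)) z = -sphericalDerivative f z ^ 2 := by
  have hharm := harmonicAt_log_norm_two_mul_deriv hf (hf' z)
  rw [log_sphericalDerivative_eq hf', hharm.1.laplacian_sub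
      ((hf.contDiff.restrict_scalars ℝ).log_one_add_norm_sq.contDiffAt),
    hharm.2.eq_of_nhds, laplacian_log_one_add_norm_sq hf, sphericalDerivative, Pi.zero_apply,
    div_pow, mul_pow]
  ring

end SphericalDerivative

open Complex in
/-- Liouville's formula: for an entire locally univalent `f`, the logarithm of
its spherical derivative satisfies `-Δu = e^{2u}`. -/
theorem log_spherical_derivative_solves_liouville
    (f : ℂ → ℂ) (hf : Differentiable ℂ f) (hf' : ∀ z : ℂ, deriv f z ≠ 0)
    (u : ℝ → ℝ → ℝ)
    (hu : ∀ x y : ℝ, u x y =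
      Real.log (2 * ‖deriv f (x + y * I)‖ /
        (1 + ‖f (x + y * I)‖ ^ 2))) :
    ∀ x y : ℝ,
      -(deriv (deriv (fun s : ℝ => u s y)) x
          + deriv (deriv (fun s : ℝ => u x s)) y)
        = Real.exp (2 * u x y) := by
  intro x y
  have hu' : ∀ s t : ℝ, u s t = Real.log (sphericalDerivative f (s + t * I)) := hu
  simp only [hu']
  rw [← laplacian_eq_deriv_deriv_add_deriv_deriv (contDiff_log_sphericalDerivative hf hf'),
    laplacian_log_sphericalDerivative hf hf', neg_neg, two_mul, Real.exp_add,
    Real.exp_log (sphericalDerivative_pos (hf' _)), sq]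
end

section
/- For the solution u(x,y) = ln(2e^x/(1 + t² + 2te^x cos y + e^{2x})) with t ≥ 0, one has sup_{y∈ℝ} ∫_{-∞}^{∞} e^{u(x,y)} dx = π + 2 arctan t. -/
/-!
Completing the square, the denominator is `(eˣ + t cos y)² + b²` with `b = √(1 + t² sin² y) ≥ 1`,
so the substitution `s = eˣ` turns the line integral into an arctangent integral equal to
`2 (π/2 - arctan (t cos y / b)) / b`. As `t cos y / b ≥ -t` and `b ≥ 1`, this is at most
`π + 2 arctan t`, with equality at `y = π`.
-/

open MeasureTheory Real Filter Set Topology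

theorem integral_exp_smul_comp_exp {E : Type*} [NormedAddCommGroup E] [NormedSpace ℝ E]
    (g : ℝ → E) : ∫ x, exp x • g (exp x) = ∫ y in Ioi 0, g y := by
  rw [← range_exp, ← image_univ, integral_image_eq_integral_abs_deriv_smul MeasurableSet.univ
    (fun x _ ↦ (hasDerivAt_exp x).hasDerivWithinAt) exp_injective.injOn g, setIntegral_univ]
  simp_rw [abs_of_pos (exp_pos _)]

theorem integral_Ioi_inv_sq_add_sq (a c : ℝ) {b : ℝ} (hb : 0 < b) :
    ∫ y in Ioi c, ((y + a) ^ 2 + b ^ 2)⁻¹ = (π / 2 - arctan ((c + a) / b)) / b := by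
  have hderiv : ∀ y ∈ Ici c, HasDerivAt (fun y ↦ arctan ((y + a) / b) / b)
      ((y + a) ^ 2 + b ^ 2)⁻¹ y := by
    intro y _
    refine ((((hasDerivAt_id' y).add_const a).div_const b).arctan.div_const b).congr_deriv ?_
    field_simp
    ring
  have hlim : Tendsto (fun y ↦ arctan ((y + a) / b) / b) atTop (𝓝 (π / 2 / b)) :=
    ((tendsto_arctan_atTop.mono_right nhdsWithin_le_nhds).comp
      ((tendsto_atTop_add_const_right _ a tendsto_id).atTop_div_const hb)).div_const b
  rw [integral_Ioi_of_hasDerivAt_of_nonneg' hderiv (fun y _ ↦ by positivity) hlim]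
  ring

theorem integral_exp_div_sq_add_sq (a : ℝ) {b : ℝ} (hb : 0 < b) :
    ∫ x, exp x / ((exp x + a) ^ 2 + b ^ 2) = (π / 2 - arctan (a / b)) / b := by
  have h := integral_exp_smul_comp_exp (fun y ↦ ((y + a) ^ 2 + b ^ 2)⁻¹)
  rwa [integral_Ioi_inv_sq_add_sq a 0 hb, zero_add] at h

theorem one_add_sq_add_mul_exp_mul_cos_add_exp (t x y : ℝ) :
    1 + t ^ 2 + 2 * t * exp x * cos y + exp (2 * x)
      = (exp x + t * cos y) ^ 2 + √(1 + t ^ 2 * sin y ^ 2) ^ 2 := by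
  rw [sq_sqrt (by positivity), sin_sq, two_mul x, exp_add]
  ring

theorem integral_exp_log_div (t y : ℝ) :
    ∫ x, exp (log (2 * exp x / (1 + t ^ 2 + 2 * t * exp x * cos y + exp (2 * x))))
      = 2 * ((π / 2 - arctan (t * cos y / √(1 + t ^ 2 * sin y ^ 2)))
        / √(1 + t ^ 2 * sin y ^ 2)) := by
  have hb : 0 < √(1 + t ^ 2 * sin y ^ 2) := sqrt_pos.2 (by positivity)
  rw [← integral_exp_div_sq_add_sq _ hb, ← integral_const_mul]
  congr 1 with x
  rw [one_add_sq_add_mul_exp_mul_cos_add_exp, exp_log (by positivity), mul_div_assoc]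

theorem two_mul_pi_div_two_sub_arctan_div_le {t b c : ℝ} (ht : 0 ≤ t) (hb : 1 ≤ b)
    (hc : -1 ≤ c) :
    2 * ((π / 2 - arctan (t * c / b)) / b) ≤ π + 2 * arctan t := by
  have hbpos : 0 < b := by linarith
  have harctan : -arctan t ≤ arctan (t * c / b) := by
    rw [← arctan_neg]
    refine arctan_strictMono.monotone ?_
    rw [le_div_iff₀ hbpos]
    nlinarith
  have hpos : 0 ≤ π / 2 - arctan (t * c / b) := by linarith [arctan_lt_pi_div_two (t * c / b)]
  calc 2 * ((π / 2 - arctan (t * c / b)) / b) ≤ 2 * (π / 2 - arctan (t * c / b)) := by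
        gcongr; exact div_le_self hpos hb
    _ ≤ π + 2 * arctan t := by linarith

open MeasureTheory in
/-- For `u(x,y) = log (2eˣ/(1+t²+2teˣ cos y+e^{2x}))` with `t ≥ 0`, the
supremum over `y` of `∫ e^{u(x,y)} dx` equals `π + 2 arctan t`. -/
theorem sup_line_integral_eq (t : ℝ) (ht : 0 ≤ t) :
    (⨆ y : ℝ, ∫ x : ℝ, Real.exp (Real.log
        (2 * Real.exp x /
          (1 + t ^ 2 + 2 * t * Real.exp x * Real.cos y + Real.exp (2 * x)))))
      = Real.pi + 2 * Real.arctan t := by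
  simp_rw [integral_exp_log_div]
  have hb : ∀ y, 1 ≤ √(1 + t ^ 2 * sin y ^ 2) :=
    fun y ↦ one_le_sqrt.2 (le_add_of_nonneg_right (by positivity))
  refine ciSup_eq_of_forall_le_of_forall_lt_exists_gt (fun y ↦ ?_) (fun w hw ↦ ⟨π, ?_⟩)
  · exact two_mul_pi_div_two_sub_arctan_div_le ht (hb y) (neg_one_le_cos y)
  · simpa [arctan_neg, mul_add, mul_div_cancel₀] using hw
end

section
/- No radial solution of -Δu = e^{2u} on ℝ² is concave: if u(x) = v(|x|) solves the Liouville equation on ℝ² with v: [0,∞) → ℝ C², then u is not a concave function. -/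
open Set Filter Real Topology

/-! On the positive axis the equation reads `v'' + v'/r = -e^{2v}`. Concavity of `u` makes `v`
concave on `[0, ∞)` with its maximum at `0` (since `s ↦ u (s, 0)` is even), so `v' ≤ 0` and
`v'' ≤ 0`. The equation rules out `v' ≡ 0`, so `v'(a) = -c < 0` for some `a > 0`. For `r ≥ a` the
equation then gives `r e^{2v(r)} ≥ -v'(r) ≥ c`, whereas the tangent line at `a` gives
`v(r) ≤ v(a) - c (r - a)`, so that `r e^{2v(r)} → 0`. -/

lemma ConcaveOn.le_apply_zero_of_even {E : Type*} [AddCommGroup E] [Module ℝ E] {f : E → ℝ}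
    (hf : ConcaveOn ℝ univ f) (heven : Function.Even f) (x : E) : f x ≤ f 0 := by
  have h := hf.2 (mem_univ x) (mem_univ (-x)) (by norm_num : (0 : ℝ) ≤ 1 / 2)
    (by norm_num : (0 : ℝ) ≤ 1 / 2) (by norm_num)
  rw [heven, smul_neg, add_neg_cancel, smul_eq_mul] at h
  linarith

lemma ConcaveOn.deriv_nonpos_of_isMaxOn {S : Set ℝ} {f : ℝ → ℝ} {a x : ℝ}
    (hf : ConcaveOn ℝ S f) (hmax : IsMaxOn f S a) (ha : a ∈ S) (hx : x ∈ S) (hax : a < x)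
    (hd : DifferentiableAt ℝ f x) : deriv f x ≤ 0 :=
  (hf.deriv_le_slope ha hx hax hd).trans <| by
    rw [slope_def_field]
    exact div_nonpos_of_nonpos_of_nonneg (sub_nonpos.mpr (hmax hx)) (sub_nonneg.mpr hax.le)

lemma ConcaveOn.le_add_deriv_mul_sub {S : Set ℝ} {f : ℝ → ℝ} {x y : ℝ} (hf : ConcaveOn ℝ S f)
    (hx : x ∈ S) (hy : y ∈ S) (hxy : x ≤ y) (hd : DifferentiableAt ℝ f x) :
    f y ≤ f x + deriv f x * (y - x) := by
  rcases hxy.eq_or_lt with rfl | hxy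
  · simp
  have h := hf.slope_le_deriv hx hy hxy hd
  rw [slope_def_field, div_le_iff₀ (sub_pos.mpr hxy)] at h
  linarith

lemma tendsto_mul_exp_of_le_sub_mul {f : ℝ → ℝ} {a b c : ℝ} (hc : 0 < c)
    (hf : ∀ x, a ≤ x → f x ≤ b - c * x) :
    Tendsto (fun x => x * exp (f x)) atTop (𝓝 0) := by
  have hlim : Tendsto (fun x => exp b * (x * exp (-c * x))) atTop (𝓝 0) := by
    simpa using (tendsto_rpow_mul_exp_neg_mul_atTop_nhds_zero 1 c hc).const_mul (exp b)
  refine tendsto_of_tendsto_of_tendsto_of_le_of_le' tendsto_const_nhds hlim ?_ ?_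
  · filter_upwards [eventually_ge_atTop 0] with x hx
    positivity
  · filter_upwards [eventually_ge_atTop a, eventually_ge_atTop 0] with x hxa hx0
    calc x * exp (f x) ≤ x * exp (b - c * x) := by gcongr; exact hf x hxa
      _ = exp b * (x * exp (-c * x)) := by rw [sub_eq_add_neg, exp_add]; ring_nf

lemma hasDerivAt_sqrt_sq_add_sq {x : ℝ} (hx : x ≠ 0) (s : ℝ) :
    HasDerivAt (fun s => √(x ^ 2 + s ^ 2)) (s / √(x ^ 2 + s ^ 2)) s := by
  have h := ((hasDerivAt_pow 2 s).const_add (x ^ 2)).sqrt (by positivity)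
  convert h using 1
  field_simp
  ring

lemma deriv_deriv_comp_sqrt_sq_add_sq_at_zero {v : ℝ → ℝ} {x : ℝ} (hx : 0 < x)
    (hv : ∀ y, 0 < y → DifferentiableAt ℝ v y) (hv' : DifferentiableAt ℝ (deriv v) x) :
    deriv (deriv fun s => v √(x ^ 2 + s ^ 2)) 0 = deriv v x / x := by
  have hr : ∀ s, 0 < √(x ^ 2 + s ^ 2) := fun s => by positivity
  have hr0 : √(x ^ 2 + 0 ^ 2) = x := by simp [sqrt_sq hx.le]
  have hr' := hasDerivAt_sqrt_sq_add_sq hx.ne'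
  have hfirst : deriv (fun s => v √(x ^ 2 + s ^ 2))
      = fun s => deriv v √(x ^ 2 + s ^ 2) * (s / √(x ^ 2 + s ^ 2)) :=
    funext fun s => ((hv _ (hr s)).hasDerivAt.comp s (hr' s)).deriv
  have houter := hv'.hasDerivAt.comp_of_eq 0 (hr' 0) hr0.symm
  have hquot := (hasDerivAt_id' (0 : ℝ)).fun_div (hr' 0) (hr 0).ne'
  rw [hfirst]
  exact (houter.fun_mul hquot).deriv.trans (by simp [sqrt_sq hx.le]; field_simp)

section Radial

variable {u : ℝ × ℝ → ℝ} {v : ℝ → ℝ}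

lemma apply_axis_of_radial (hrad : ∀ p : ℝ × ℝ, u p = v √(p.1 ^ 2 + p.2 ^ 2)) (s : ℝ) :
    u (s, 0) = v |s| := by
  simp [hrad, sqrt_sq_eq_abs]

lemma laplacian_radial_on_axis (hrad : ∀ p : ℝ × ℝ, u p = v √(p.1 ^ 2 + p.2 ^ 2))
    (hv : ∀ y, 0 < y → DifferentiableAt ℝ v y) {x : ℝ} (hx : 0 < x)
    (hv' : DifferentiableAt ℝ (deriv v) x) :
    deriv (deriv fun s => u (s, 0)) x + deriv (deriv fun s => u (x, s)) 0
      = deriv (deriv v) x + deriv v x / x := by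
  have haxis : (fun s => u (s, 0)) =ᶠ[𝓝 x] v := by
    filter_upwards [Ioi_mem_nhds hx] with s hs
    rw [apply_axis_of_radial hrad, abs_of_pos hs]
  have hvert : (fun s => u (x, s)) = fun s => v √(x ^ 2 + s ^ 2) := funext fun s => hrad (x, s)
  rw [haxis.deriv.deriv_eq, hvert, deriv_deriv_comp_sqrt_sq_add_sq_at_zero hx hv hv']

lemma concaveOn_Ici_and_isMaxOn_of_radial (hrad : ∀ p : ℝ × ℝ, u p = v √(p.1 ^ 2 + p.2 ^ 2))
    (hu : ConcaveOn ℝ univ u) : ConcaveOn ℝ (Ici 0) v ∧ IsMaxOn v (Ici 0) 0 := by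
  have haxis : ConcaveOn ℝ univ fun s => u (s, 0) := hu.comp_linearMap (LinearMap.inl ℝ ℝ ℝ)
  have heq : ∀ s ∈ Ici (0 : ℝ), u (s, 0) = v s := fun s hs => by
    rw [apply_axis_of_radial hrad, abs_of_nonneg hs]
  refine ⟨(haxis.subset (subset_univ _) (convex_Ici 0)).congr heq, fun s hs => ?_⟩
  have := haxis.le_apply_zero_of_even (fun s => by simp only [apply_axis_of_radial hrad, abs_neg]) s
  rwa [heq s hs, heq 0 self_mem_Ici] at this

end Radial

lemma not_concaveOn_Ici_of_radial_liouville {v : ℝ → ℝ} (hmax : IsMaxOn v (Ici 0) 0)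
    (hv : ∀ x, 0 < x → DifferentiableAt ℝ v x)
    (hode : ∀ x, 0 < x → deriv (deriv v) x + deriv v x / x = -exp (2 * v x)) :
    ¬ ConcaveOn ℝ (Ici 0) v := by
  intro hconc
  have hanti : AntitoneOn (deriv v) (Ioi 0) :=
    (hconc.subset Ioi_subset_Ici_self (convex_Ioi 0)).antitoneOn_deriv hv
  have hv'_nonpos : ∀ x, 0 < x → deriv v x ≤ 0 := fun x hx =>
    hconc.deriv_nonpos_of_isMaxOn hmax self_mem_Ici hx.le hx (hv x hx)
  have hv''_nonpos : ∀ x, 0 < x → deriv (deriv v) x ≤ 0 := fun x hx => by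
    rw [← derivWithin_of_isOpen isOpen_Ioi hx]
    exact hanti.derivWithin_nonpos
  obtain ⟨a, ha, hva⟩ : ∃ a, 0 < a ∧ deriv v a < 0 := by
    by_contra! h
    have hzero : deriv v =ᶠ[𝓝 1] 0 := by
      filter_upwards [Ioi_mem_nhds one_pos] with x hx
      exact le_antisymm (hv'_nonpos x hx) (h x hx)
    have h1 := hode 1 one_pos
    rw [hzero.deriv_eq, hzero.eq_of_nhds] at h1
    simp at h1
  set c := -deriv v a
  have hc : 0 < c := neg_pos.mpr hva
  have hlower : ∀ x, a ≤ x → c ≤ x * exp (2 * v x) := by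
    intro x hax
    have hx : 0 < x := ha.trans_le hax
    have hode_x : x * exp (2 * v x) = -(x * deriv (deriv v) x) - deriv v x := by
      have h := hode x hx
      field_simp at h
      linarith
    have hv'_le := hanti ha hx hax
    have hv''_mul := mul_nonpos_of_nonneg_of_nonpos hx.le (hv''_nonpos x hx)
    linarith
  have hupper : ∀ x, a ≤ x → 2 * v x ≤ 2 * (v a + c * a) - 2 * c * x := by
    intro x hax
    have h := hconc.le_add_deriv_mul_sub ha.le (ha.le.trans hax) hax (hv a ha)
    linarith
  obtain ⟨x, hx, hxc⟩ := ((eventually_ge_atTop a).and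
    ((tendsto_mul_exp_of_le_sub_mul (by positivity) hupper).eventually (gt_mem_nhds hc))).exists
  linarith [hlower x hx]

/-- No radial C² solution of `-Δu = e^{2u}` on `ℝ²` is concave. -/
theorem radial_solution_not_concave (u : ℝ × ℝ → ℝ) (v : ℝ → ℝ)
    (hv : ContDiffOn ℝ 2 v (Set.Ici 0))
    (hrad : ∀ p : ℝ × ℝ, u p = v (Real.sqrt (p.1 ^ 2 + p.2 ^ 2)))
    (heq : ∀ p : ℝ × ℝ,
      -(deriv (deriv (fun s : ℝ => u (s, p.2))) p.1
          + deriv (deriv (fun s : ℝ => u (p.1, s))) p.2)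
        = Real.exp (2 * u p)) :
    ¬ ConcaveOn ℝ Set.univ u := by
  intro hu
  have hv₂ : ContDiffOn ℝ 2 v (Ioi 0) := hv.mono Ioi_subset_Ici_self
  have hdv : ∀ x, 0 < x → DifferentiableAt ℝ v x := fun x hx =>
    (hv₂.contDiffAt (Ioi_mem_nhds hx)).differentiableAt (by norm_num)
  have hddv : ∀ x, 0 < x → DifferentiableAt ℝ (deriv v) x := fun x hx =>
    ((hv₂.deriv_of_isOpen isOpen_Ioi (m := 1) (by norm_num)).contDiffAt
      (Ioi_mem_nhds hx)).differentiableAt (by norm_num)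
  have hode : ∀ x, 0 < x → deriv (deriv v) x + deriv v x / x = -exp (2 * v x) := by
    intro x hx
    have h := heq (x, 0)
    rw [laplacian_radial_on_axis hrad hdv hx (hddv x hx), apply_axis_of_radial hrad,
      abs_of_pos hx] at h
    linarith
  obtain ⟨hconc, hmax⟩ := concaveOn_Ici_and_isMaxOn_of_radial hrad hu
  exact not_concaveOn_Ici_of_radial_liouville hmax hdv hode hconc
end
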